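/- Let X be a set with pairwise commuting maps φ₁,…,φ_d : X → X, let g : X → ℝ, and let (n_k)_{k≥1} be a sequence of nonzero elements of ℕ^d with associated family of indices (S_i) and associated sequence (m_k) (so m₀ = 0 and m_k = n_k + 2m_{k−1}). Define λ₁ = 1 and λ_{k+1} = λ_k² / 2^k, and define functions h₁ = g and h_{k+1} = (h_k ∘ φ_{n_{k+1}+m_k}) · (g ∘ φ_{m_k}) · h_k / 2^k (pointwise operations). Then for every k ≥ 1, h_k = λ_k · ∏_{s ∈ (S₀ ∪ ⋯ ∪ S_k) \ {m_k}} (g ∘ φ_s), the product being a pointwise product over the finite set (S₀ ∪ ⋯ ∪ S_k) \ {m_k}. -/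
import Mathlib


open Filter Topology Set

/-- `phiIter φ n = φ₁^[n₁] ∘ ⋯ ∘ φ_d^[n_d]`. -/
def phiIter {X : Type*} {d : ℕ} (φ : Fin d → X → X) (n : Fin d → ℕ) : X → X :=
  (List.ofFn fun j : Fin d => (φ j)^[n j]).foldr (· ∘ ·) id

/-- `m₀ = 0`, `m_k = n_k + 2 m_{k-1}`. -/
def assocM {d : ℕ} (n : ℕ → Fin d → ℕ) : ℕ → Fin d → ℕ
  | 0 => 0
  | k + 1 => n (k + 1) + 2 • assocM n k

/-- `assocU n k = S₀ ∪ ⋯ ∪ S_k`, the cumulative union of the family of indices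
associated to `(n_k)`:  `S₀ = {0}`, `S_{k+1} = n_{k+1} + m_k + (S₀ ∪ ⋯ ∪ S_k)`. -/
def assocU {d : ℕ} (n : ℕ → Fin d → ℕ) : ℕ → Finset (Fin d → ℕ)
  | 0 => {0}
  | k + 1 => assocU n k ∪ (assocU n k).image fun j => n (k + 1) + assocM n k + j

lemma phiIter_succ_d {X : Type*} {d : ℕ} (φ : Fin (d + 1) → X → X) (n : Fin (d + 1) → ℕ) :
    phiIter φ n = (φ 0)^[n 0] ∘ phiIter (fun i => φ i.succ) (fun i => n i.succ) := by
  simp [phiIter, List.ofFn_succ]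

lemma commute_phiIter {X : Type*} {d : ℕ} {φ : Fin d → X → X} {f : X → X}
    (hf : ∀ j, Function.Commute f (φ j)) (n : Fin d → ℕ) :
    Function.Commute f (phiIter φ n) := by
  induction d with
  | zero => exact fun x => rfl
  | succ d ih =>
    rw [phiIter_succ_d]
    exact ((hf 0).iterate_right _).comp_right (ih (fun j => hf j.succ) _)

lemma phiIter_zero {X : Type*} {d : ℕ} (φ : Fin d → X → X) :
    phiIter φ 0 = id := by
  induction d with
  | zero => rfl
  | succ d ih =>
    rw [phiIter_succ_d]
    show (φ 0)^[(0 : Fin (d+1) → ℕ) 0] ∘ phiIter (fun i => φ i.succ) 0 = id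
    rw [ih]
    simp

lemma phiIter_add {X : Type*} {d : ℕ} {φ : Fin d → X → X}
    (hcomm : ∀ i j, Function.Commute (φ i) (φ j)) (a b : Fin d → ℕ) :
    phiIter φ (a + b) = phiIter φ a ∘ phiIter φ b := by
  induction d with
  | zero => rfl
  | succ d ih =>
    rw [phiIter_succ_d, phiIter_succ_d, phiIter_succ_d]
    have h1 : ((φ 0))^[(a + b) 0] = (φ 0)^[a 0] ∘ (φ 0)^[b 0] := by
      rw [Pi.add_apply, Function.iterate_add]
    have h2 : (fun i : Fin d => (a + b) i.succ)
        = (fun i : Fin d => a i.succ) + (fun i : Fin d => b i.succ) := rfl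
    rw [h1, h2, ih (fun i j => hcomm i.succ j.succ)]
    have hc : Function.Commute ((φ 0)^[b 0])
        (phiIter (fun i : Fin d => φ i.succ) (fun i => a i.succ)) :=
      commute_phiIter (fun j => (hcomm 0 j.succ).iterate_left _) _
    funext x
    exact congrArg ((φ 0)^[a 0]) (hc _)

lemma assocM_mem_assocU {d : ℕ} (n : ℕ → Fin d → ℕ) (k : ℕ) :
    assocM n k ∈ assocU n k := by
  induction k with
  | zero => simp [assocM, assocU]
  | succ k ih =>
    have : assocM n (k + 1) = n (k + 1) + assocM n k + assocM n k := by
      simp [assocM, two_smul]; abel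
    rw [assocU, this]
    exact Finset.mem_union_right _ (Finset.mem_image_of_mem _ ih)

lemma mem_assocU_le {d : ℕ} (n : ℕ → Fin d → ℕ) (k : ℕ) :
    ∀ s ∈ assocU n k, ∀ j, s j ≤ assocM n k j := by
  induction k with
  | zero => simp [assocU, assocM]
  | succ k ih =>
    intro s hs j
    rw [assocU, Finset.mem_union] at hs
    have hM : assocM n (k + 1) j = n (k + 1) j + assocM n k j + assocM n k j := by
      simp [assocM, two_smul]; ring
    rcases hs with hs | hs
    · exact (ih s hs j).trans (by omega)
    · obtain ⟨t, ht, rfl⟩ := Finset.mem_image.mp hs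
      have := ih t ht j
      simp only [Pi.add_apply]
      omega

lemma not_mem_assocU {d : ℕ} (n : ℕ → Fin d → ℕ) (k : ℕ) (hnk : n (k + 1) ≠ 0) :
    ∀ t ∈ (assocU n k).image fun j => n (k + 1) + assocM n k + j, t ∉ assocU n k := by
  intro t ht hmem
  obtain ⟨j0, hj0⟩ := Function.ne_iff.mp hnk
  have h1 := mem_assocU_le n k t hmem j0
  obtain ⟨u, hu, rfl⟩ := Finset.mem_image.mp ht
  simp only [Pi.add_apply, Pi.zero_apply] at h1 hj0
  omega

/-- The Claim in the proof of Lemma `rad`:  if `h₁ = g` and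
`h_{k+1} = (h_k ∘ φ_{n_{k+1}+m_k}) ⬝ (g ∘ φ_{m_k}) ⬝ h_k / 2^k`, and `λ₁ = 1`,
`λ_{k+1} = λ_k²/2^k`, then `h_k = λ_k ∏_{s ∈ (S₀∪⋯∪S_k)\{m_k}} g ∘ φ_s`. -/
theorem product_formula_claim {X : Type*} {d : ℕ} (φ : Fin d → X → X)
    (hcomm : ∀ i j, Function.Commute (φ i) (φ j)) (g : X → ℝ)
    (n : ℕ → Fin d → ℕ) (hn : ∀ k, 1 ≤ k → n k ≠ 0)
    (lam : ℕ → ℝ) (hlam1 : lam 1 = 1)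
    (hlam : ∀ k, 1 ≤ k → lam (k + 1) = lam k ^ 2 / 2 ^ k)
    (h : ℕ → X → ℝ) (hh1 : h 1 = g)
    (hh : ∀ k, 1 ≤ k → h (k + 1) = fun x =>
      h k (phiIter φ (n (k + 1) + assocM n k) x) * g (phiIter φ (assocM n k) x)
        * h k x / 2 ^ k) :
    ∀ k, 1 ≤ k → h k = fun x =>
      lam k * ∏ s ∈ (assocU n k).erase (assocM n k), g (phiIter φ s x) := by
  intro k hk
  induction k, hk using Nat.le_induction with
  | base =>
    have hU1 : assocU n 1 = {0, n 1} := by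
      simp only [assocU, assocM, Finset.image_singleton, add_zero, smul_zero,
        Finset.insert_eq]
    have hM1 : assocM n 1 = n 1 := by
      simp [assocM]
    rw [hh1, hU1, hM1, hlam1]
    funext x
    have hn1 : n 1 ≠ 0 := hn 1 le_rfl
    rw [Finset.erase_insert_of_ne (by simpa using hn1.symm)]
    simp [phiIter_zero]
  | succ k hk ih =>
    have hnk : n (k + 1) ≠ 0 := hn (k + 1) (by omega)
    set c := n (k + 1) + assocM n k with hc
    set M := assocM n k with hM
    set E := (assocU n k).erase M with hE
    have hinj : Function.Injective (fun j : Fin d → ℕ => c + j) :=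
      fun a b hab => add_left_cancel hab
    have hMk1 : assocM n (k + 1) = c + M := by
      show n (k + 1) + 2 • assocM n k = c + M
      rw [hc, hM, two_smul]; abel
    have hU' : assocU n (k + 1)
        = assocU n k ∪ (assocU n k).image (fun j => c + j) := rfl
    have hdisj : ∀ t ∈ (assocU n k).image (fun j => c + j), t ∉ assocU n k :=
      not_mem_assocU n k hnk
    have hMmem : M ∈ assocU n k := assocM_mem_assocU n k
    have hcM : c + M ∉ assocU n k :=
      hdisj _ (Finset.mem_image_of_mem _ hMmem)
    have hErase : (assocU n (k + 1)).erase (assocM n (k + 1))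
        = assocU n k ∪ E.image (fun j => c + j) := by
      rw [hU', hMk1, Finset.erase_union_distrib, Finset.erase_eq_of_notMem hcM,
        hE, Finset.image_erase hinj]
    have hdisj2 : Disjoint (assocU n k) (E.image fun j => c + j) := by
      rw [Finset.disjoint_right]
      intro t ht
      exact hdisj t (Finset.image_subset_image (Finset.erase_subset _ _) ht)
    funext x
    have hcomp : ∀ s, g (phiIter φ (c + s) x) = g (phiIter φ s (phiIter φ c x)) := by
      intro s
      rw [add_comm, phiIter_add hcomm]; rfl
    simp only [hh k hk, ih, hErase]
    rw [Finset.prod_union hdisj2, Finset.prod_image (fun a _ b _ hab => hinj hab),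
      ← Finset.mul_prod_erase _ _ hMmem, ← hE, hlam k hk]
    simp only [hcomp]
    ring
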